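/- For the map ψ(X) = X ⊕ X² ⊕ ⋯ ⊕ Xⁿ from m×m real matrices to m×(mn) real matrices (columnwise direct sum), the image ψ(M_{m,m}(ℝ)) is not contained in any affine hyperplane of M_{m,mn}(ℝ); i.e., the affine span of the image is all of M_{m,mn}(ℝ). -/

import Mathlib

/-!
If `l ∘ ψ` were constant, the constant would be `l (ψ 0) = 0`. Replacing `X` by `t • X` turns
`l (ψ X)` into a polynomial in `t` whose coefficient of `t^(k+1)` is `l` applied to `X^(k+1)` placed
in the `k`-th block; so each of these vanishes. The `(k+1)`-th powers include all idempotents, which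
span the matrix algebra (`E_pq = (E_pp + E_pq) - E_pp`), hence `l` vanishes on every block.
-/

/-- The column index of the `ℓ`-th block (`0`-indexed), column `t`, in an `m × (m*n)` matrix
built as a columnwise direct sum of `n` blocks of size `m × m`. -/
def colIdx (m n : ℕ) (ℓ : Fin n) (t : Fin m) : Fin (m * n) :=
  ⟨(ℓ : ℕ) * m + (t : ℕ), by
    calc (ℓ : ℕ) * m + (t : ℕ) < (ℓ : ℕ) * m + m := Nat.add_lt_add_left t.isLt _
    _ = ((ℓ : ℕ) + 1) * m := (Nat.succ_mul _ _).symm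
    _ ≤ n * m := Nat.mul_le_mul_right m ℓ.isLt
    _ = m * n := Nat.mul_comm n m⟩

/-- The columnwise direct sum `X ⊕ X² ⊕ ⋯ ⊕ Xⁿ`. -/
noncomputable def veroneseMatrix (m n : ℕ) (hm : 0 < m) (X : Matrix (Fin m) (Fin m) ℝ) :
    Matrix (Fin m) (Fin (m * n)) ℝ :=
  Matrix.of fun i j => (X ^ ((j : ℕ) / m + 1)) i ⟨(j : ℕ) % m, Nat.mod_lt _ hm⟩

open Polynomial in
theorem eq_zero_of_forall_sum_mul_pow_succ_eq_zero {R : Type*} [CommRing R] [IsDomain R]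
    [Infinite R] {n : ℕ} (a : Fin n → R) (h : ∀ t : R, ∑ k, a k * t ^ ((k : ℕ) + 1) = 0) :
    a = 0 := by
  set p : R[X] := ∑ k, C (a k) * X ^ ((k : ℕ) + 1)
  have hp : p = 0 := Polynomial.funext fun t => by simpa [p, eval_finsetSum] using h t
  funext k
  simpa [p, finsetSum_coeff, coeff_C_mul_X_pow, Fin.val_inj] using congrArg (coeff · (k + 1)) hp

theorem Matrix.span_setOf_isIdempotentElem {R ι : Type*} [CommRing R] [Fintype ι] [DecidableEq ι] :
    Submodule.span R {e : Matrix ι ι R | IsIdempotentElem e} = ⊤ := by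
  have hdiag (p : ι) : IsIdempotentElem (single p p (1 : R)) := by
    simp [IsIdempotentElem, single_mul_single_same]
  have hrow {p q : ι} (hpq : p ≠ q) : IsIdempotentElem (single p p (1 : R) + single p q 1) := by
    have hqp (r : ι) : single p q (1 : R) * single p r 1 = 0 :=
      single_mul_single_of_ne 1 p q p hpq.symm 1
    simp [IsIdempotentElem, add_mul, mul_add, single_mul_single_same, hqp]
  rw [eq_top_iff, ← (stdBasis R ι ι).span_eq, Submodule.span_le]
  rintro _ ⟨⟨p, q⟩, rfl⟩
  rw [stdBasis_eq_single]
  by_cases hpq : p = q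
  · subst hpq
    exact Submodule.subset_span (hdiag p)
  · have : single p q (1 : R) = (single p p 1 + single p q 1) - single p p 1 := by abel
    rw [this]
    exact Submodule.sub_mem _ (Submodule.subset_span (hrow hpq)) (Submodule.subset_span (hdiag p))

theorem Matrix.linearMap_eq_zero_of_forall_map_pow_succ {R ι : Type*} [CommRing R] [IsDomain R]
    [Infinite R] [Fintype ι] [DecidableEq ι] {n : ℕ} (L : (Fin n → Matrix ι ι R) →ₗ[R] R)
    (h : ∀ X : Matrix ι ι R, L (fun k => X ^ ((k : ℕ) + 1)) = 0) : L = 0 := by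
  have hblock (k : Fin n) (X : Matrix ι ι R) : L (Pi.single k (X ^ ((k : ℕ) + 1))) = 0 := by
    refine congrFun (eq_zero_of_forall_sum_mul_pow_succ_eq_zero
      (fun k => L (Pi.single k (X ^ ((k : ℕ) + 1)))) fun t => ?_) k
    rw [← h (t • X), ← Finset.univ_sum_single fun k : Fin n => (t • X) ^ ((k : ℕ) + 1), map_sum]
    simp [smul_pow, Pi.single_smul, mul_comm]
  refine LinearMap.pi_ext' fun k => ?_
  have hspan : Submodule.span R {e : Matrix ι ι R | IsIdempotentElem e} ≤
      LinearMap.ker (L ∘ₗ LinearMap.single R _ k) :=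
    Submodule.span_le.2 fun e he => by simpa [he.pow_succ_eq] using hblock k e
  rw [Matrix.span_setOf_isIdempotentElem, top_le_iff, LinearMap.ker_eq_top] at hspan
  simp [hspan]

def concatColBlocks {R : Type*} [Semiring R] {m n : ℕ} (hm : 0 < m) :
    (Fin n → Matrix (Fin m) (Fin m) R) →ₗ[R] Matrix (Fin m) (Fin (m * n)) R where
  toFun B := Matrix.of fun i j =>
    B ⟨(j : ℕ) / m, Nat.div_lt_of_lt_mul j.isLt⟩ i ⟨(j : ℕ) % m, Nat.mod_lt _ hm⟩
  map_add' _ _ := rfl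
  map_smul' _ _ := rfl

theorem concatColBlocks_surjective {R : Type*} [Semiring R] {m n : ℕ} (hm : 0 < m) :
    Function.Surjective (concatColBlocks (R := R) (n := n) hm) := fun M =>
  ⟨fun k i t => M i (colIdx m n k t), by
    ext i j
    exact congrArg (M i) (Fin.ext (Nat.div_add_mod' _ _))⟩

theorem veroneseMatrix_eq_concatColBlocks (m n : ℕ) (hm : 0 < m) (X : Matrix (Fin m) (Fin m) ℝ) :
    veroneseMatrix m n hm X = concatColBlocks hm fun k => X ^ ((k : ℕ) + 1) :=
  rfl

theorem stmt6_general (m n : ℕ) (hm : 0 < m) :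
    ¬ ∃ (l : Matrix (Fin m) (Fin (m * n)) ℝ →ₗ[ℝ] ℝ) (c : ℝ),
      l ≠ 0 ∧ ∀ X : Matrix (Fin m) (Fin m) ℝ, l (veroneseMatrix m n hm X) = c := by
  rintro ⟨l, c, hl, h⟩
  simp only [veroneseMatrix_eq_concatColBlocks] at h
  have hc : c = 0 := by simpa [← Pi.zero_def] using (h 0).symm
  have hcomp : l ∘ₗ concatColBlocks hm = 0 ∘ₗ concatColBlocks hm := by
    rw [LinearMap.zero_comp]
    exact Matrix.linearMap_eq_zero_of_forall_map_pow_succ _ fun X => (h X).trans hc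
  exact hl ((LinearMap.cancel_right (concatColBlocks_surjective hm)).1 hcomp)

/-- The image of `X ↦ X ⊕ X² ⊕ ⋯ ⊕ Xⁿ` is not contained in any affine hyperplane of
`M_{m,mn}(ℝ)`. -/
theorem stmt6 (m n : ℕ) (hm : 0 < m) (hn : 0 < n) :
    ¬ ∃ (l : Matrix (Fin m) (Fin (m * n)) ℝ →ₗ[ℝ] ℝ) (c : ℝ),
      l ≠ 0 ∧ ∀ X : Matrix (Fin m) (Fin m) ℝ, l (veroneseMatrix m n hm X) = c :=
  stmt6_general m n hm
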